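/- Let K ∈ ℝ, N ∈ (1,∞), p > N/2 and 0 < R < D_{K,N}. Then ∫₀^R h_{K,N}(t)·(t/v_{K,N}(t))^{1+1/(2p−1)} dt < ∞. -/

import Mathlib

open Real MeasureTheory Set

/-- The one-dimensional `(K,N)`-model density `h_{K,N}`. -/
noncomputable def modelDensity (K N t : ℝ) : ℝ :=
  if 0 < K then Real.sin (Real.sqrt (K / (N - 1)) * t) ^ (N - 1)
  else if K = 0 then t ^ (N - 1)
  else Real.sinh (Real.sqrt (-K / (N - 1)) * t) ^ (N - 1)

/-- The model volume `v_{K,N}(r) = ∫₀^r h_{K,N}(t) dt`. -/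
noncomputable def modelVolume (K N r : ℝ) : ℝ :=
  ∫ t in Set.Ioo (0:ℝ) r, modelDensity K N t

/-! On `(0, R)` the density `h_{K,N}` is the `(N-1)`-th power of a function squeezed between two
multiples of `t` (by concavity of `sin` on `[0, π]`, resp. `sinh x ≤ x eˣ`), so
`c₁ t^{N-1} ≤ h_{K,N}(t) ≤ c₂ t^{N-1}`. Integrating the lower bound gives `v_{K,N}(t) ≥ c₁ tᴺ / N`,
so the integrand is `O(t^{(N-1)(1-a)})` with `a = 1 + 1/(2p-1)`; the exponent `-(N-1)/(2p-1)`
exceeds `-1` exactly because `p > N/2`. -/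

section RpowComparable

variable {f : ℝ → ℝ} {β c₁ c₂ R : ℝ}

lemma integrableOn_Ioo_const_mul_rpow (hβ : -1 < β) (c R : ℝ) :
    IntegrableOn (fun t : ℝ => c * t ^ β) (Ioo 0 R) :=
  ((intervalIntegral.intervalIntegrable_rpow' hβ).1.mono_set Ioo_subset_Ioc_self).const_mul c

lemma integrableOn_Ioo_of_le_rpow (hβ : -1 < β) (hf : ContinuousOn f (Ioo 0 R))
    (hf₀ : ∀ t ∈ Ioo 0 R, 0 ≤ f t) (hf₂ : ∀ t ∈ Ioo 0 R, f t ≤ c₂ * t ^ β) :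
    IntegrableOn f (Ioo 0 R) := by
  refine (integrableOn_Ioo_const_mul_rpow hβ c₂ R).mono'
    (hf.aestronglyMeasurable measurableSet_Ioo) ?_
  filter_upwards [ae_restrict_mem measurableSet_Ioo] with t ht
  rw [norm_of_nonneg (hf₀ t ht)]
  exact hf₂ t ht

lemma mul_rpow_div_le_setIntegral_Ioo (hβ : -1 < β) {t : ℝ} (ht : 0 ≤ t)
    (hf : IntegrableOn f (Ioo 0 t)) (hf₁ : ∀ s ∈ Ioo 0 t, c₁ * s ^ β ≤ f s) :
    c₁ * t ^ (β + 1) / (β + 1) ≤ ∫ s in Ioo 0 t, f s := by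
  have hpow : ∫ s in Ioo 0 t, c₁ * s ^ β = c₁ * t ^ (β + 1) / (β + 1) := by
    rw [← integral_Ioc_eq_integral_Ioo, ← intervalIntegral.integral_of_le ht,
      intervalIntegral.integral_const_mul, integral_rpow (Or.inl hβ),
      zero_rpow (by linarith), sub_zero, mul_div_assoc]
  rw [← hpow]
  exact setIntegral_mono_on (integrableOn_Ioo_const_mul_rpow hβ c₁ t) hf measurableSet_Ioo hf₁

lemma setIntegral_Ioo_pos (hβ : -1 < β) (hc₁ : 0 < c₁) {t : ℝ} (ht : 0 < t)
    (hf : IntegrableOn f (Ioo 0 t)) (hf₁ : ∀ s ∈ Ioo 0 t, c₁ * s ^ β ≤ f s) :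
    0 < ∫ s in Ioo 0 t, f s := by
  have : 0 < β + 1 := by linarith
  have := rpow_pos_of_pos ht (β + 1)
  exact (by positivity : 0 < c₁ * t ^ (β + 1) / (β + 1)).trans_le
    (mul_rpow_div_le_setIntegral_Ioo hβ ht.le hf hf₁)

lemma div_setIntegral_Ioo_le (hβ : -1 < β) (hc₁ : 0 < c₁) {t : ℝ} (ht : 0 < t)
    (hf : IntegrableOn f (Ioo 0 t)) (hf₁ : ∀ s ∈ Ioo 0 t, c₁ * s ^ β ≤ f s) :
    t / ∫ s in Ioo 0 t, f s ≤ (β + 1) / c₁ * t ^ (-β) :=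
  calc t / ∫ s in Ioo 0 t, f s ≤ t / (c₁ * t ^ (β + 1) / (β + 1)) := by
        have := rpow_pos_of_pos ht (β + 1)
        have : 0 < β + 1 := by linarith
        gcongr
        exact mul_rpow_div_le_setIntegral_Ioo hβ ht.le hf hf₁
    _ = (β + 1) / c₁ * t ^ (-β) := by
        rw [rpow_add ht, rpow_one, rpow_neg ht.le]
        have := rpow_pos_of_pos ht β
        field_simp

theorem integrableOn_mul_div_setIntegral_Ioo_rpow {a : ℝ} (hβ : -1 < β) (ha : 0 ≤ a)
    (hβa : -1 < β * (1 - a)) (hc₁ : 0 < c₁) (hf : ContinuousOn f (Ioo 0 R))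
    (hbounds : ∀ t ∈ Ioo 0 R, c₁ * t ^ β ≤ f t ∧ f t ≤ c₂ * t ^ β) :
    IntegrableOn (fun t => f t * (t / ∫ s in Ioo 0 t, f s) ^ a) (Ioo 0 R) := by
  have hf₀ : ∀ t ∈ Ioo 0 R, 0 ≤ f t := fun t ht =>
    le_trans (by have := rpow_pos_of_pos ht.1 β; positivity) (hbounds t ht).1
  have hf_int : IntegrableOn f (Ioo 0 R) :=
    integrableOn_Ioo_of_le_rpow hβ hf hf₀ fun t ht => (hbounds t ht).2
  have hf_int_Ioo : ∀ t ∈ Ioo 0 R, IntegrableOn f (Ioo 0 t) := fun t ht =>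
    hf_int.mono_set (Ioo_subset_Ioo_right ht.2.le)
  have hf₁ : ∀ t ∈ Ioo 0 R, ∀ s ∈ Ioo 0 t, c₁ * s ^ β ≤ f s := fun t ht s hs =>
    (hbounds s ⟨hs.1, hs.2.trans ht.2⟩).1
  have hF_pos : ∀ t ∈ Ioo 0 R, 0 < ∫ s in Ioo 0 t, f s := fun t ht =>
    setIntegral_Ioo_pos hβ hc₁ ht.1 (hf_int_Ioo t ht) (hf₁ t ht)
  have hF_cont : ContinuousOn (fun t => ∫ s in Ioo 0 t, f s) (Ioo 0 R) := by
    exact ((intervalIntegral.continuousOn_primitive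
      ((integrableOn_Icc_iff_integrableOn_Ioo).mpr hf_int)).mono Ioo_subset_Icc_self).congr
      fun t _ => integral_Ioc_eq_integral_Ioo.symm
  have h_meas : AEStronglyMeasurable (fun t => f t * (t / ∫ s in Ioo 0 t, f s) ^ a)
      (volume.restrict (Ioo 0 R)) := by
    exact (hf.mul ((continuousOn_id.div hF_cont fun t ht => (hF_pos t ht).ne').rpow_const
      fun t ht => Or.inl (div_pos ht.1 (hF_pos t ht)).ne')).aestronglyMeasurable measurableSet_Ioo
  refine (integrableOn_Ioo_const_mul_rpow hβa (c₂ * ((β + 1) / c₁) ^ a) R).mono' h_meas ?_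
  filter_upwards [ae_restrict_mem measurableSet_Ioo] with t ht
  have hF_le := div_setIntegral_Ioo_le hβ hc₁ ht.1 (hf_int_Ioo t ht) (hf₁ t ht)
  have hq := (div_pos ht.1 (hF_pos t ht)).le
  rw [norm_of_nonneg (mul_nonneg (hf₀ t ht) (rpow_nonneg hq a))]
  calc f t * (t / ∫ s in Ioo 0 t, f s) ^ a
      ≤ c₂ * t ^ β * ((β + 1) / c₁ * t ^ (-β)) ^ a := by
        gcongr
        · exact le_trans (hf₀ t ht) (hbounds t ht).2
        · exact (hbounds t ht).2
    _ = c₂ * ((β + 1) / c₁) ^ a * t ^ (β * (1 - a)) := by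
        have : 0 ≤ (β + 1) / c₁ := div_nonneg (by linarith) hc₁.le
        rw [mul_rpow this (rpow_nonneg ht.1.le _), ← rpow_mul ht.1.le, mul_sub, mul_one,
          sub_eq_add_neg, rpow_add ht.1, neg_mul]
        ring

end RpowComparable

lemma sinh_le_mul_exp (x : ℝ) : sinh x ≤ x * exp x := by
  have h₁ : -(2 * x) + 1 ≤ exp (-(2 * x)) := add_one_le_exp _
  have h₂ : exp (-(2 * x)) = exp (-x) * exp (-x) := by rw [← exp_add]; ring_nf
  have h₃ : exp x * exp (-x) = 1 := by rw [← exp_add]; simp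
  rw [sinh_eq]
  nlinarith [exp_pos x, exp_pos (-x)]

lemma sin_div_mul_le_sin {b x : ℝ} (hx : 0 ≤ x) (hxb : x ≤ b) (hb : b ≤ π) :
    sin b / b * x ≤ sin x := by
  rcases hx.eq_or_lt with rfl | hx
  · simp
  have hb₀ : 0 < b := hx.trans_le hxb
  have h := strictConcaveOn_sin_Icc.concaveOn.2 ⟨le_rfl, pi_pos.le⟩ ⟨hb₀.le, hb⟩
    (sub_nonneg.2 ((div_le_one hb₀).2 hxb)) (div_nonneg hx.le hb₀.le) (sub_add_cancel 1 (x / b))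
  simp only [smul_eq_mul, mul_zero, zero_add, sin_zero, div_mul_cancel₀ x hb₀.ne'] at h
  linarith [div_mul_comm (sin b) b x]

noncomputable def modelSine (K N t : ℝ) : ℝ :=
  if 0 < K then sin (√(K / (N - 1)) * t)
  else if K = 0 then t
  else sinh (√(-K / (N - 1)) * t)

lemma modelDensity_eq_modelSine_rpow (K N t : ℝ) :
    modelDensity K N t = modelSine K N t ^ (N - 1) := by
  unfold modelDensity modelSine
  split_ifs <;> rfl

lemma continuous_modelDensity (K : ℝ) {N : ℝ} (hN : 1 ≤ N) : Continuous (modelDensity K N) := by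
  have h : Continuous (modelSine K N) := by
    unfold modelSine
    split_ifs <;> fun_prop
  simpa only [← modelDensity_eq_modelSine_rpow] using
    h.rpow_const (p := N - 1) fun _ => Or.inr (sub_nonneg.2 hN)

lemma exists_modelSine_linear_bounds {K N R : ℝ} (hN : 1 < N) (hR : 0 < R)
    (hRD : 0 < K → R < π * √((N - 1) / K)) :
    ∃ c d : ℝ, 0 < c ∧ ∀ t ∈ Ioo 0 R, c * t ≤ modelSine K N t ∧ modelSine K N t ≤ d * t := by
  have hN₁ : 0 < N - 1 := sub_pos.2 hN
  rcases lt_trichotomy K 0 with hK | rfl | hK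
  · set μ := √(-K / (N - 1))
    have hμ : 0 < μ := sqrt_pos.2 (div_pos (neg_pos.2 hK) hN₁)
    refine ⟨μ, μ * exp (μ * R), hμ, fun t ht => ?_⟩
    simp only [modelSine, if_neg hK.not_gt, if_neg hK.ne]
    constructor
    · exact self_le_sinh_iff.2 (mul_pos hμ ht.1).le
    · calc sinh (μ * t) ≤ μ * t * exp (μ * t) := sinh_le_mul_exp _
        _ ≤ μ * t * exp (μ * R) := by gcongr; exacts [(mul_pos hμ ht.1).le, ht.2.le]
        _ = μ * exp (μ * R) * t := by ring
  · exact ⟨1, 1, one_pos, fun t _ => by simp [modelSine]⟩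
  · set μ := √(K / (N - 1))
    have hμ : 0 < μ := sqrt_pos.2 (div_pos hK hN₁)
    have hμR : μ * R < π := by
      have h := mul_lt_mul_of_pos_left (hRD hK) hμ
      rwa [mul_left_comm, ← sqrt_mul (div_pos hK hN₁).le, div_mul_div_cancel₀ hN₁.ne',
        div_self hK.ne', sqrt_one, mul_one] at h
    refine ⟨sin (μ * R) / R, μ, div_pos (sin_pos_of_pos_of_lt_pi (mul_pos hμ hR) hμR) hR,
      fun t ht => ?_⟩
    simp only [modelSine, if_pos hK]
    constructor
    · have h := sin_div_mul_le_sin (mul_pos hμ ht.1).le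
        (mul_le_mul_of_nonneg_left ht.2.le hμ.le) hμR.le
      calc sin (μ * R) / R * t = sin (μ * R) / (μ * R) * (μ * t) := by field_simp
        _ ≤ sin (μ * t) := h
    · exact sin_le (mul_pos hμ ht.1).le

lemma exists_modelDensity_rpow_bounds {K N R : ℝ} (hN : 1 < N) (hR : 0 < R)
    (hRD : 0 < K → R < π * √((N - 1) / K)) :
    ∃ c₁ c₂ : ℝ, 0 < c₁ ∧ ∀ t ∈ Ioo 0 R,
      c₁ * t ^ (N - 1) ≤ modelDensity K N t ∧ modelDensity K N t ≤ c₂ * t ^ (N - 1) := by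
  obtain ⟨c, d, hc, h⟩ := exists_modelSine_linear_bounds hN hR hRD
  refine ⟨c ^ (N - 1), d ^ (N - 1), rpow_pos_of_pos hc _, fun t ht => ?_⟩
  obtain ⟨hlo, hhi⟩ := h t ht
  have hct : 0 ≤ c * t := (mul_pos hc ht.1).le
  have hd : 0 ≤ d := nonneg_of_mul_nonneg_left ((hct.trans hlo).trans hhi) ht.1
  rw [modelDensity_eq_modelSine_rpow, ← mul_rpow hc.le ht.1.le, ← mul_rpow hd ht.1.le]
  exact ⟨rpow_le_rpow hct hlo (sub_nonneg.2 hN.le),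
    rpow_le_rpow (hct.trans hlo) hhi (sub_nonneg.2 hN.le)⟩

/-- for `K ∈ ℝ`, `N ∈ (1,∞)`, `p > N/2` and `0 < R < D_{K,N}`,
the integral `∫₀^R h_{K,N}(t) (t/v_{K,N}(t))^{1+1/(2p−1)} dt` is finite. -/
theorem bishopGromov_constant_integrable
    (K N p R : ℝ) (hN : 1 < N) (hp : N / 2 < p)
    (hR : 0 < R) (hRD : 0 < K → R < π * Real.sqrt ((N - 1) / K)) :
    IntegrableOn
      (fun t : ℝ =>
        modelDensity K N t * (t / modelVolume K N t) ^ (1 + 1 / (2 * p - 1)))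
      (Set.Ioo 0 R) := by
  obtain ⟨c₁, c₂, hc₁, hbounds⟩ := exists_modelDensity_rpow_bounds hN hR hRD
  have hp₁ : 0 < 2 * p - 1 := by linarith
  have hexp : -1 < (N - 1) * (1 - (1 + 1 / (2 * p - 1))) := by
    rw [sub_add_cancel_left, mul_neg, mul_one_div, neg_lt_neg_iff, div_lt_one hp₁]
    linarith
  exact integrableOn_mul_div_setIntegral_Ioo_rpow (by linarith) (by positivity) hexp hc₁
    (continuous_modelDensity K hN.le).continuousOn hbounds
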